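/- arXiv:1812.07791 — 6 statements merged into one kernel-verified Lean document; each statement's English description precedes it below -/
import Mathlib

section
/- Generalized Hautus-type resolvent test (Theorem 3.1): Let ε, ψ ∈ 𝔠. The following two assertions are equivalent. (1) C is spectrally coercive with ε, ψ: for every nonzero z ∈ X₂ with Σ_k (λ k − μ(z))² |z k|² < ε(μ(z)) · Σ_k |z k|², one has ‖C z‖² ≥ ψ(μ(z)) · Σ_k |z k|². (2) For every nonzero z ∈ X₂ and every t ∈ ℝ, Σ_k |z k|² ≤ max{ ‖C z‖² / ψ(μ(z)), (Σ_k (λ k − t)² |z k|²) / ((t − μ(z))² + ε(μ(z))) }. -/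
open scoped BigOperators

/-- Membership in `X₂`: the sequence of coefficients against eigenvalues squared is summable. -/
def MemX2 (lam : ℕ → ℝ) (z : ℕ → ℂ) : Prop :=
  Summable fun k => (lam k)^2 * ‖z k‖^2

/-- The `A`-frequency of a state `z`. -/
noncomputable def freq (lam : ℕ → ℝ) (z : ℕ → ℂ) : ℝ :=
  (∑' k, lam k * ‖z k‖^2) / ∑' k, ‖z k‖^2

section aux

variable {lam : ℕ → ℝ} {z : ℕ → ℂ}

lemma sumN (hmono : StrictMono lam) (hpos : ∀ k, 0 < lam k) (hz2 : MemX2 lam z) :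
    Summable fun k => ‖z k‖^2 := by
  refine Summable.of_nonneg_of_le (fun k => by positivity)
    (fun k => ?_) (hz2.mul_left ((lam 0)^2)⁻¹)
  have h0 : 0 < lam 0 := hpos 0
  have h1 : lam 0 ≤ lam k := hmono.monotone (Nat.zero_le k)
  have h2 : (lam 0)^2 ≤ (lam k)^2 := by nlinarith
  rw [le_inv_mul_iff₀ (by positivity)]
  nlinarith [mul_le_mul_of_nonneg_right h2 (sq_nonneg ‖z k‖)]

lemma sumM (hmono : StrictMono lam) (hpos : ∀ k, 0 < lam k) (hz2 : MemX2 lam z) :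
    Summable fun k => lam k * ‖z k‖^2 := by
  refine Summable.of_nonneg_of_le (fun k => mul_nonneg (hpos k).le (sq_nonneg _))
    (fun k => ?_) (hz2.mul_left (lam 0)⁻¹)
  have h0 : 0 < lam 0 := hpos 0
  have h1 : lam 0 ≤ lam k := hmono.monotone (Nat.zero_le k)
  rw [le_inv_mul_iff₀ h0]
  nlinarith [mul_le_mul_of_nonneg_right h1 (mul_nonneg (hpos k).le (sq_nonneg ‖z k‖))]

lemma sumS (hmono : StrictMono lam) (hpos : ∀ k, 0 < lam k) (hz2 : MemX2 lam z) (t : ℝ) :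
    Summable fun k => (lam k - t)^2 * ‖z k‖^2 := by
  have : (fun k => (lam k - t)^2 * ‖z k‖^2)
      = fun k => ((lam k)^2 * ‖z k‖^2 - (2*t) * (lam k * ‖z k‖^2)) + t^2 * ‖z k‖^2 := by
    funext k; ring
  rw [this]
  exact ((hz2.sub ((sumM hmono hpos hz2).mul_left (2*t))).add
    ((sumN hmono hpos hz2).mul_left (t^2)))

lemma S_eq (hmono : StrictMono lam) (hpos : ∀ k, 0 < lam k) (hz2 : MemX2 lam z) (t : ℝ) :
    (∑' k, (lam k - t)^2 * ‖z k‖^2)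
      = (∑' k, (lam k)^2 * ‖z k‖^2) - (2*t) * (∑' k, lam k * ‖z k‖^2)
        + t^2 * (∑' k, ‖z k‖^2) := by
  have e : (fun k => (lam k - t)^2 * ‖z k‖^2)
      = fun k => ((lam k)^2 * ‖z k‖^2 - (2*t) * (lam k * ‖z k‖^2)) + t^2 * ‖z k‖^2 := by
    funext k; ring
  rw [e, Summable.tsum_add (((hz2.sub ((sumM hmono hpos hz2).mul_left (2*t))))
      ) ((sumN hmono hpos hz2).mul_left (t^2)),
    Summable.tsum_sub hz2 ((sumM hmono hpos hz2).mul_left (2*t)), tsum_mul_left, tsum_mul_left]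

lemma Npos (hmono : StrictMono lam) (hpos : ∀ k, 0 < lam k) (hz : z ≠ 0)
    (hz2 : MemX2 lam z) : 0 < ∑' k, ‖z k‖^2 := by
  obtain ⟨k, hk⟩ : ∃ k, z k ≠ 0 := by
    by_contra h; push_neg at h; exact hz (funext h)
  exact Summable.tsum_pos (sumN hmono hpos hz2) (fun k => sq_nonneg _) k
    (pow_pos (norm_pos_iff.2 hk) 2)

lemma freq_nonneg (hmono : StrictMono lam) (hpos : ∀ k, 0 < lam k) (hz : z ≠ 0)
    (hz2 : MemX2 lam z) : 0 ≤ freq lam z := by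
  unfold freq
  exact div_nonneg (tsum_nonneg fun k => mul_nonneg (hpos k).le (sq_nonneg _))
    (Npos hmono hpos hz hz2).le

lemma key (hmono : StrictMono lam) (hpos : ∀ k, 0 < lam k) (hz : z ≠ 0)
    (hz2 : MemX2 lam z) (t : ℝ) :
    (∑' k, (lam k - t)^2 * ‖z k‖^2)
      = (∑' k, (lam k - freq lam z)^2 * ‖z k‖^2)
        + (t - freq lam z)^2 * (∑' k, ‖z k‖^2) := by
  have hN0 : 0 < ∑' k, ‖z k‖^2 := Npos hmono hpos hz hz2
  have hMN : (∑' k, lam k * ‖z k‖^2) = freq lam z * ∑' k, ‖z k‖^2 := by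
    rw [freq, div_mul_cancel₀ _ hN0.ne']
  rw [S_eq hmono hpos hz2 t, S_eq hmono hpos hz2 (freq lam z), hMN]
  ring

end aux

/-- Generalized Hautus-type resolvent test (Theorem 3.1): spectral coercivity of `C`
with functions `ε, ψ ∈ 𝔠` is equivalent to the resolvent inequality. -/
theorem stmt2 (lam : ℕ → ℝ) (hmono : StrictMono lam) (hpos : ∀ k, 0 < lam k)
    (Y : Type) [NormedAddCommGroup Y] [InnerProductSpace ℂ Y] [CompleteSpace Y]
    (C : (ℕ → ℂ) →ₗ[ℂ] Y)
    (ε ψ : ℝ → ℝ)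
    (hεc : ContinuousOn ε (Set.Ici 0)) (hεm : AntitoneOn ε (Set.Ici 0))
    (hεp : ∀ s, 0 ≤ s → 0 < ε s)
    (hψc : ContinuousOn ψ (Set.Ici 0)) (hψm : AntitoneOn ψ (Set.Ici 0))
    (hψp : ∀ s, 0 ≤ s → 0 < ψ s) :
    (∀ z : ℕ → ℂ, z ≠ 0 → MemX2 lam z →
        (∑' k, (lam k - freq lam z)^2 * ‖z k‖^2) < ε (freq lam z) * ∑' k, ‖z k‖^2 →
        ψ (freq lam z) * ∑' k, ‖z k‖^2 ≤ ‖C z‖^2) ↔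
    (∀ z : ℕ → ℂ, z ≠ 0 → MemX2 lam z → ∀ t : ℝ,
        (∑' k, ‖z k‖^2) ≤
          max (‖C z‖^2 / ψ (freq lam z))
            ((∑' k, (lam k - t)^2 * ‖z k‖^2) / ((t - freq lam z)^2 + ε (freq lam z)))) := by
  constructor
  · intro h z hz hz2 t
    have hN0 : 0 < ∑' k, ‖z k‖^2 := Npos hmono hpos hz hz2
    have hμ : 0 ≤ freq lam z := freq_nonneg hmono hpos hz hz2
    have hε0 : 0 < ε (freq lam z) := hεp _ hμ
    have hψ0 : 0 < ψ (freq lam z) := hψp _ hμ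
    by_cases hc : (∑' k, (lam k - freq lam z)^2 * ‖z k‖^2)
        < ε (freq lam z) * ∑' k, ‖z k‖^2
    · refine le_max_of_le_left ?_
      rw [le_div_iff₀ hψ0, mul_comm]
      exact h z hz hz2 hc
    · refine le_max_of_le_right ?_
      push_neg at hc
      rw [le_div_iff₀ (by positivity), key hmono hpos hz hz2 t]
      nlinarith [sq_nonneg (t - freq lam z)]
  · intro h z hz hz2 hlt
    have hN0 : 0 < ∑' k, ‖z k‖^2 := Npos hmono hpos hz hz2
    have hμ : 0 ≤ freq lam z := freq_nonneg hmono hpos hz hz2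
    have hε0 : 0 < ε (freq lam z) := hεp _ hμ
    have hψ0 : 0 < ψ (freq lam z) := hψp _ hμ
    have h2 := h z hz hz2 (freq lam z)
    have hright : (∑' k, (lam k - freq lam z)^2 * ‖z k‖^2)
        / ((freq lam z - freq lam z)^2 + ε (freq lam z)) < ∑' k, ‖z k‖^2 := by
      have hd : (0:ℝ) < (freq lam z - freq lam z)^2 + ε (freq lam z) := by
        rw [sub_self]; nlinarith
      rw [div_lt_iff₀ hd, sub_self]
      nlinarith
    have : (∑' k, ‖z k‖^2) ≤ ‖C z‖^2 / ψ (freq lam z) := by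
      rcases max_cases (‖C z‖^2 / ψ (freq lam z))
        ((∑' k, (lam k - freq lam z)^2 * ‖z k‖^2)
          / ((freq lam z - freq lam z)^2 + ε (freq lam z))) with ⟨he, _⟩ | ⟨he, _⟩
      · rwa [he] at h2
      · rw [he] at h2; linarith
    rw [le_div_iff₀ hψ0] at this
    linarith [this]
end

section
/- Frequency localization of the truncated evolution (Theorem 3.3): For all κ₂ ≥ κ₁ > 0 there exists a constant c₀ > 0, depending only on κ₁ and κ₂, with the following property. Let λ : ℕ → ℝ be strictly increasing with positive terms, let z₀ be a nonzero element of X₂, let T > 0, and let g : ℝ → ℂ satisfy κ₁ T / (1 + T² s²) ≤ |g(s)| ≤ κ₂ T / (1 + T² s²) for all s ∈ ℝ. For τ ∈ ℝ define the localized frequency μ̂(τ) = (Σ_k (λ k) |g(τ − λ k)|² |z₀ k|²) / (Σ_k |g(τ − λ k)|² |z₀ k|²) (the denominator is positive). Then for every τ ∈ ℝ, λ 0 ≤ μ̂(τ) ≤ 4 |τ| + c₀ · μ(z₀). -/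
open scoped BigOperators

set_option maxHeartbeats 1000000 in
/-- Frequency localization of the truncated evolution (Theorem 3.3). -/
theorem stmt5 (κ₁ κ₂ : ℝ) (hκ₁ : 0 < κ₁) (hκ : κ₁ ≤ κ₂) :
    ∃ c₀ : ℝ, 0 < c₀ ∧
      ∀ (lam : ℕ → ℝ), StrictMono lam → (∀ k, 0 < lam k) →
      ∀ (z0 : ℕ → ℂ), z0 ≠ 0 → MemX2 lam z0 →
      ∀ (T : ℝ), 0 < T →
      ∀ (g : ℝ → ℂ),
        (∀ s : ℝ, κ₁ * T / (1 + T^2 * s^2) ≤ ‖g s‖ ∧ ‖g s‖ ≤ κ₂ * T / (1 + T^2 * s^2)) →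
      ∀ τ : ℝ,
        lam 0 ≤ (∑' k, lam k * ‖g (τ - lam k)‖^2 * ‖z0 k‖^2) /
            (∑' k, ‖g (τ - lam k)‖^2 * ‖z0 k‖^2) ∧
        (∑' k, lam k * ‖g (τ - lam k)‖^2 * ‖z0 k‖^2) /
            (∑' k, ‖g (τ - lam k)‖^2 * ‖z0 k‖^2)
          ≤ 4 * |τ| + c₀ * freq lam z0 := by
  have hκ₂ : 0 < κ₂ := lt_of_lt_of_le hκ₁ hκ
  refine ⟨162 * κ₂^2 / κ₁^2, by positivity, ?_⟩
  intro lam hmono hpos z0 hz0 hX2 T hT g hg τ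
  set C : ℝ := 81 * κ₂^2 / κ₁^2 with hC
  have hC1 : (1:ℝ) ≤ C := by
    rw [hC, le_div_iff₀ (by positivity)]
    nlinarith [mul_le_mul hκ hκ hκ₁.le hκ₂.le]
  have hCpos : 0 < C := lt_of_lt_of_le one_pos hC1
  have hlam0 : ∀ k, lam 0 ≤ lam k := fun k => hmono.monotone (Nat.zero_le k)
  have hlam0pos : 0 < lam 0 := hpos 0
  -- basic summability facts
  have hZ : Summable fun k => ‖z0 k‖^2 := by
    refine Summable.of_nonneg_of_le (fun k => by positivity)
      (fun k => ?_) (hX2.div_const ((lam 0)^2))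
    rw [le_div_iff₀ (by positivity)]
    nlinarith [mul_le_mul_of_nonneg_right
      (pow_le_pow_left₀ hlam0pos.le (hlam0 k) 2) (sq_nonneg ‖z0 k‖)]
  have hLs : Summable fun k => lam k * ‖z0 k‖^2 := by
    refine Summable.of_nonneg_of_le
      (fun k => mul_nonneg (hpos k).le (by positivity))
      (fun k => ?_) (hX2.div_const (lam 0))
    rw [le_div_iff₀ hlam0pos]
    nlinarith [mul_le_mul_of_nonneg_right (hlam0 k)
      (mul_nonneg (hpos k).le (sq_nonneg ‖z0 k‖))]
  -- notation
  set u : ℕ → ℝ := fun k => ‖g (τ - lam k)‖^2 with hu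
  set d : ℕ → ℝ := fun k => 1 + T^2 * (τ - lam k)^2 with hd
  have hd1 : ∀ k, (1:ℝ) ≤ d k := fun k => by
    simp only [hd]; nlinarith [sq_nonneg (T * (τ - lam k)), sq_nonneg T, sq_nonneg (τ - lam k), mul_nonneg (sq_nonneg T) (sq_nonneg (τ - lam k))]
  have hdpos : ∀ k, (0:ℝ) < d k := fun k => lt_of_lt_of_le one_pos (hd1 k)
  have hun : ∀ k, 0 ≤ u k := fun k => by simp only [hu]; positivity
  have huL : ∀ k, (κ₁*T)^2 / (d k)^2 ≤ u k := by
    intro k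
    have h : κ₁ * T / d k ≤ ‖g (τ - lam k)‖ := (hg (τ - lam k)).1
    calc (κ₁*T)^2 / (d k)^2 = (κ₁*T/d k)^2 := (div_pow _ _ _).symm
    _ ≤ ‖g (τ - lam k)‖^2 := pow_le_pow_left₀ (by positivity) h 2
    _ = u k := rfl
  have huU : ∀ k, u k ≤ (κ₂*T)^2 / (d k)^2 := by
    intro k
    have h : ‖g (τ - lam k)‖ ≤ κ₂ * T / d k := (hg (τ - lam k)).2
    calc u k = ‖g (τ - lam k)‖^2 := rfl
    _ ≤ (κ₂*T/d k)^2 := pow_le_pow_left₀ (norm_nonneg _) h 2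
    _ = (κ₂*T)^2 / (d k)^2 := div_pow _ _ _
  set w : ℕ → ℝ := fun k => u k * ‖z0 k‖^2 with hw
  have hw0 : ∀ k, 0 ≤ w k := fun k => mul_nonneg (hun k) (by positivity)
  have hwU : ∀ k, w k ≤ (κ₂*T)^2 * ‖z0 k‖^2 := by
    intro k
    have h3 : (κ₂*T)^2/(d k)^2 ≤ (κ₂*T)^2 := by
      rw [div_le_iff₀ (by positivity)]
      have h1 : (1:ℝ) ≤ (d k)^2 := by nlinarith [hd1 k]
      nlinarith [mul_le_mul_of_nonneg_left h1 (sq_nonneg (κ₂*T))]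
    exact mul_le_mul_of_nonneg_right ((huU k).trans h3) (by positivity)
  have hW : Summable w := Summable.of_nonneg_of_le hw0 hwU (hZ.mul_left _)
  have hlamW : Summable (fun k => lam k * w k) := by
    refine Summable.of_nonneg_of_le
      (fun k => mul_nonneg (hpos k).le (hw0 k)) (fun k => ?_) (hLs.mul_left ((κ₂*T)^2))
    calc lam k * w k ≤ lam k * ((κ₂*T)^2 * ‖z0 k‖^2) :=
          mul_le_mul_of_nonneg_left (hwU k) (hpos k).le
    _ = (κ₂*T)^2 * (lam k * ‖z0 k‖^2) := by ring
  -- positivity of the denominators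
  obtain ⟨k0, hk0⟩ := Function.ne_iff.mp hz0
  have hk0' : z0 k0 ≠ 0 := by simpa using hk0
  have hz0k0 : 0 < ‖z0 k0‖^2 := by
    have : 0 < ‖z0 k0‖ := norm_pos_iff.mpr hk0'
    positivity
  have hwk0 : 0 < w k0 := by
    have h1 : 0 < (κ₁*T)^2 / (d k0)^2 := by
      have := hdpos k0; positivity
    exact mul_pos (lt_of_lt_of_le h1 (huL k0)) hz0k0
  have hD : 0 < ∑' k, w k := Summable.tsum_pos hW hw0 k0 hwk0
  have hZpos : 0 < ∑' k, ‖z0 k‖^2 := Summable.tsum_pos hZ (fun k => by positivity) k0 hz0k0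
  -- rewrite goal sums in terms of `w`
  have hNum : (∑' k, lam k * ‖g (τ - lam k)‖^2 * ‖z0 k‖^2) = ∑' k, lam k * w k :=
    tsum_congr fun k => by simp only [hw, hu]; ring
  have hDen : (∑' k, ‖g (τ - lam k)‖^2 * ‖z0 k‖^2) = ∑' k, w k :=
    tsum_congr fun k => rfl
  rw [hNum, hDen]
  set D : ℝ := ∑' k, w k with hDdef
  set Z : ℝ := ∑' k, ‖z0 k‖^2 with hZdef
  set L : ℝ := ∑' k, lam k * ‖z0 k‖^2 with hLdef
  have hL0 : 0 ≤ L := tsum_nonneg fun k => mul_nonneg (hpos k).le (by positivity)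
  constructor
  · -- lower bound
    rw [le_div_iff₀ hD]
    calc lam 0 * D = ∑' k, lam 0 * w k := (tsum_mul_left).symm
    _ ≤ ∑' k, lam k * w k :=
        Summable.tsum_le_tsum (fun k => mul_le_mul_of_nonneg_right (hlam0 k) (hw0 k))
          (hW.mul_left _) hlamW
  · -- upper bound
    set f : ℕ → ℝ := fun k => if 2*|τ| < lam k then lam k * w k else 0 with hf
    have hf0 : ∀ k, 0 ≤ f k := by
      intro k; simp only [hf]
      split
      · exact mul_nonneg (hpos k).le (hw0 k)
      · exact le_refl 0
    have hfle : ∀ k, f k ≤ lam k * w k := by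
      intro k; simp only [hf]
      split
      · exact le_refl _
      · exact mul_nonneg (hpos k).le (hw0 k)
    have hF : Summable f := Summable.of_nonneg_of_le hf0 hfle hlamW
    set B : ℝ := ∑' k, f k with hB
    have hB0 : 0 ≤ B := tsum_nonneg hf0
    -- Step A: N ≤ 2|τ| D + B
    have hNA : (∑' k, lam k * w k) ≤ 2*|τ| * D + B := by
      have step : ∀ k, lam k * w k ≤ 2*|τ| * w k + f k := by
        intro k
        by_cases h : 2*|τ| < lam k
        · simp only [hf, if_pos h]
          nlinarith [hw0 k, abs_nonneg τ]
        · simp only [hf, if_neg h]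
          push_neg at h
          nlinarith [mul_le_mul_of_nonneg_right h (hw0 k)]
      calc (∑' k, lam k * w k) ≤ ∑' k, (2*|τ| * w k + f k) :=
            Summable.tsum_le_tsum step hlamW ((hW.mul_left _).add hF)
      _ = 2*|τ| * D + B := by
          rw [Summable.tsum_add (hW.mul_left _) hF, tsum_mul_left]
    -- key pairwise estimate
    have key : ∀ m k, ‖z0 m‖^2 * f k ≤
        C * (lam m * ‖z0 m‖^2 * w k + (lam k * ‖z0 k‖^2) * w m) := by
      intro m k
      have hrhs0 : 0 ≤ C * (lam m * ‖z0 m‖^2 * w k + (lam k * ‖z0 k‖^2) * w m) := by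
        refine mul_nonneg hCpos.le (add_nonneg ?_ ?_)
        · exact mul_nonneg (mul_nonneg (hpos m).le (by positivity)) (hw0 k)
        · exact mul_nonneg (mul_nonneg (hpos k).le (by positivity)) (hw0 m)
      by_cases hk : 2*|τ| < lam k
      · simp only [hf, if_pos hk]
        rcases le_or_gt (lam k) (lam m) with hmk | hmk
        · -- small frequency: compare directly
          have h1 : ‖z0 m‖^2 * (lam k * w k) ≤ lam m * ‖z0 m‖^2 * w k := by
            have := mul_le_mul_of_nonneg_right hmk
              (mul_nonneg (sq_nonneg ‖z0 m‖) (hw0 k))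
            nlinarith
          have h2 : lam m * ‖z0 m‖^2 * w k ≤
              C * (lam m * ‖z0 m‖^2 * w k + (lam k * ‖z0 k‖^2) * w m) := by
            have hx : 0 ≤ lam m * ‖z0 m‖^2 * w k :=
              mul_nonneg (mul_nonneg (hpos m).le (by positivity)) (hw0 k)
            have hy : 0 ≤ (lam k * ‖z0 k‖^2) * w m :=
              mul_nonneg (mul_nonneg (hpos k).le (by positivity)) (hw0 m)
            calc lam m * ‖z0 m‖^2 * w k
                = 1 * (lam m * ‖z0 m‖^2 * w k) := (one_mul _).symm
            _ ≤ C * (lam m * ‖z0 m‖^2 * w k) :=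
                mul_le_mul_of_nonneg_right hC1 hx
            _ ≤ C * (lam m * ‖z0 m‖^2 * w k + (lam k * ‖z0 k‖^2) * w m) :=
                mul_le_mul_of_nonneg_left (le_add_of_nonneg_right hy) hCpos.le
          exact h1.trans h2
        · -- large frequency: use the two-sided bound on g
          have hτ1 : τ ≤ |τ| := le_abs_self τ
          have hτ2 : -|τ| ≤ τ := neg_abs_le τ
          have e1 : (τ - lam m)^2 ≤ (9/4) * (lam k)^2 := by
            nlinarith [abs_nonneg τ, (hpos m).le, hmk.le, hk]
          have e2 : (lam k)^2 / 4 ≤ (τ - lam k)^2 := by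
            nlinarith [mul_pos (show 0 < lam k/2 - τ by nlinarith)
              (show 0 < 3*(lam k)/2 - τ by nlinarith [hpos k])]
          have hdm9 : d m ≤ 9 * d k := by
            simp only [hd]
            nlinarith [mul_le_mul_of_nonneg_left e1 (sq_nonneg T),
              mul_le_mul_of_nonneg_left e2 (sq_nonneg T)]
          have hUC : (κ₂*T)^2/(d k)^2 ≤ C * ((κ₁*T)^2/(d m)^2) := by
            have hEq : C * ((κ₁*T)^2/(d m)^2) = 81*(κ₂*T)^2/(d m)^2 := by
              rw [hC]; field_simp
            rw [hEq, div_le_div_iff₀ (by positivity) (by positivity)]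
            nlinarith [mul_le_mul_of_nonneg_left
              (mul_self_le_mul_self (hdpos m).le hdm9) (sq_nonneg (κ₂*T))]
          have hu' : u k ≤ C * u m :=
            (huU k).trans (hUC.trans (mul_le_mul_of_nonneg_left (huL m) hCpos.le))
          calc ‖z0 m‖^2 * (lam k * w k)
              = (lam k * ‖z0 k‖^2 * ‖z0 m‖^2) * u k := by
                simp only [hw]; ring
          _ ≤ (lam k * ‖z0 k‖^2 * ‖z0 m‖^2) * (C * u m) := by
                refine mul_le_mul_of_nonneg_left hu' ?_
                exact mul_nonneg (mul_nonneg (hpos k).le (by positivity)) (by positivity)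
          _ = C * ((lam k * ‖z0 k‖^2) * w m) := by simp only [hw]; ring
          _ ≤ C * (lam m * ‖z0 m‖^2 * w k + (lam k * ‖z0 k‖^2) * w m) := by
                refine mul_le_mul_of_nonneg_left ?_ hCpos.le
                have hx : 0 ≤ lam m * ‖z0 m‖^2 * w k :=
                  mul_nonneg (mul_nonneg (hpos m).le (by positivity)) (hw0 k)
                linarith
      · simp only [hf, if_neg hk, mul_zero]
        exact hrhs0
    -- sum the key estimate over k for fixed m
    have step_m : ∀ m, ‖z0 m‖^2 * B ≤ C * (lam m * ‖z0 m‖^2 * D + L * w m) := by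
      intro m
      have hS2 : Summable (fun k => C * (lam m * ‖z0 m‖^2 * w k + (lam k * ‖z0 k‖^2) * w m)) :=
        ((hW.mul_left (lam m * ‖z0 m‖^2)).add (hLs.mul_right (w m))).mul_left C
      calc ‖z0 m‖^2 * B = ∑' k, ‖z0 m‖^2 * f k := (tsum_mul_left).symm
      _ ≤ ∑' k, C * (lam m * ‖z0 m‖^2 * w k + (lam k * ‖z0 k‖^2) * w m) :=
          Summable.tsum_le_tsum (key m) (hF.mul_left _) hS2
      _ = C * (lam m * ‖z0 m‖^2 * D + L * w m) := by
          rw [tsum_mul_left, Summable.tsum_add (hW.mul_left _) (hLs.mul_right _),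
            tsum_mul_left, tsum_mul_right]
    -- sum over m
    have hZB : Z * B ≤ C * (L * D + L * D) := by
      have hS3 : Summable (fun m => C * (lam m * ‖z0 m‖^2 * D + L * w m)) :=
        ((hLs.mul_right D).add (hW.mul_left L)).mul_left C
      calc Z * B = ∑' m, ‖z0 m‖^2 * B := (tsum_mul_right).symm
      _ ≤ ∑' m, C * (lam m * ‖z0 m‖^2 * D + L * w m) :=
          Summable.tsum_le_tsum step_m (hZ.mul_right B) hS3
      _ = C * (L * D + L * D) := by
          rw [tsum_mul_left, Summable.tsum_add (hLs.mul_right D) (hW.mul_left L),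
            tsum_mul_right, tsum_mul_left]
    -- conclude
    have hBle : B ≤ C * (L * D + L * D) / Z := by
      rw [le_div_iff₀ hZpos]
      nlinarith [hZB]
    have hfreq : freq lam z0 = L / Z := rfl
    rw [hfreq, div_le_iff₀ hD]
    have hEq2 : C * (L * D + L * D) / Z = 162 * κ₂^2 / κ₁^2 * (L / Z) * D := by
      rw [hC]; field_simp; ring
    have habs : 0 ≤ 2 * |τ| * D := by positivity
    nlinarith [hNA, hBle, hEq2, mul_nonneg (abs_nonneg τ) hD.le]
end

section
/- Head dominates tail for the localized coefficients (inequality (3.10), with corrected constants): Let κ₂ ≥ κ₁ > 0, let λ : ℕ → ℝ be strictly increasing with positive terms, let z₀ be a nonzero element of X₂, let T > 0, and let g : ℝ → ℂ satisfy κ₁ T / (1 + T² s²) ≤ |g(s)| ≤ κ₂ T / (1 + T² s²) for all s ∈ ℝ. Set μ₀ = μ(z₀), r₀ = 2 (2 κ₂²/κ₁² + 1) μ₀ and, for τ ∈ ℝ, K = |τ| + r₀. Then 2 · Σ_{k : |τ − λ k| > K} |g(τ − λ k)|² |z₀ k|² ≤ Σ_{k : |τ − λ k| ≤ K} |g(τ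 − λ k)|² |z₀ k|². -/
open scoped BigOperators

private lemma tsum_mono_set' {f : ℕ → ℝ} (hf : ∀ k, 0 ≤ f k) (hs : Summable f)
    {s t : Set ℕ} (h : s ⊆ t) : ∑' k : s, f k ≤ ∑' k : t, f k := by
  rw [tsum_subtype, tsum_subtype]
  exact Summable.tsum_le_tsum (fun k => Set.indicator_le_indicator_of_subset h hf k)
    (hs.indicator s) (hs.indicator t)

private lemma key_alg (κ₁ κ₂ μ₀ r₀ M S T D : ℝ) (hκ₁ : 0 < κ₁)
    (hμ : 0 < μ₀) (hM0 : 0 ≤ M) (hT : 0 < T) (hD : 0 < D)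
    (hr₀ : r₀ = 2 * (2 * κ₂^2 / κ₁^2 + 1) * μ₀) (hMar : r₀ * M ≤ μ₀ * S) :
    2 * ((κ₂ * T / D)^2 * M) ≤ (κ₁ * T / D)^2 * (S - M) := by
  have hr₀κ : r₀ * κ₁^2 = 2 * (2 * κ₂^2 + κ₁^2) * μ₀ := by
    rw [hr₀]; field_simp
  have h1 : κ₁^2 * (r₀ * M) ≤ κ₁^2 * (μ₀ * S) :=
    mul_le_mul_of_nonneg_left hMar (sq_nonneg _)
  have h2 : μ₀ * ((2 * κ₂^2 + κ₁^2) * 2 * M) ≤ μ₀ * (κ₁^2 * S) := by nlinarith [h1, hr₀κ]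
  have h3 : (2 * κ₂^2 + κ₁^2) * 2 * M ≤ κ₁^2 * S := le_of_mul_le_mul_left h2 hμ
  have hE : (0:ℝ) < (T / D)^2 := by positivity
  have h4 : (T / D)^2 * ((2 * κ₂^2 + κ₁^2) * 2 * M) ≤ (T / D)^2 * (κ₁^2 * S) :=
    mul_le_mul_of_nonneg_left h3 hE.le
  have h5 : 0 ≤ (T / D)^2 * ((2 * κ₂^2 + κ₁^2) * M) :=
    mul_nonneg hE.le (mul_nonneg (by positivity) hM0)
  have e : (κ₁ * T / D)^2 * (S - M) - 2 * ((κ₂ * T / D)^2 * M)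
      = ((T / D)^2 * (κ₁^2 * S) - (T / D)^2 * ((2 * κ₂^2 + κ₁^2) * 2 * M))
        + (T / D)^2 * ((2 * κ₂^2 + κ₁^2) * M) := by ring
  linarith [h4, h5, e]

/-- Head dominates tail for the localized coefficients (inequality (3.10), with
corrected constants). -/
theorem stmt7 (κ₁ κ₂ : ℝ) (hκ₁ : 0 < κ₁) (hκ : κ₁ ≤ κ₂)
    (lam : ℕ → ℝ) (hmono : StrictMono lam) (hpos : ∀ k, 0 < lam k)
    (z0 : ℕ → ℂ) (hz0 : z0 ≠ 0) (hz2 : MemX2 lam z0)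
    (T : ℝ) (hT : 0 < T)
    (g : ℝ → ℂ)
    (hg : ∀ s : ℝ, κ₁ * T / (1 + T^2 * s^2) ≤ ‖g s‖ ∧ ‖g s‖ ≤ κ₂ * T / (1 + T^2 * s^2))
    (μ₀ : ℝ) (hμ₀ : μ₀ = freq lam z0)
    (r₀ : ℝ) (hr₀ : r₀ = 2 * (2 * κ₂^2 / κ₁^2 + 1) * μ₀)
    (τ K : ℝ) (hK : K = |τ| + r₀) :
    2 * (∑' k : {k : ℕ // K < |τ - lam k|}, ‖g (τ - lam (k : ℕ))‖^2 * ‖z0 (k : ℕ)‖^2)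
      ≤ ∑' k : {k : ℕ // |τ - lam k| ≤ K}, ‖g (τ - lam (k : ℕ))‖^2 * ‖z0 (k : ℕ)‖^2 := by
  have hκ₂ : 0 < κ₂ := lt_of_lt_of_le hκ₁ hκ
  set a : ℕ → ℝ := fun k => ‖z0 k‖^2 with ha_def
  have ha : ∀ k, 0 ≤ a k := fun k => sq_nonneg _
  have hl0 : 0 < lam 0 := hpos 0
  have hlge : ∀ k, lam 0 ≤ lam k := fun k => hmono.monotone (Nat.zero_le k)
  have hsla2 : Summable (fun k => (lam k)^2 * a k) := hz2
  have hsla : Summable (fun k => lam k * a k) := by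
    apply Summable.of_nonneg_of_le (fun k => mul_nonneg (hpos k).le (ha k))
      (fun k => ?_) (hsla2.div_const (lam 0))
    rw [le_div_iff₀ hl0]
    nlinarith [mul_le_mul_of_nonneg_right (hlge k) (mul_nonneg (hpos k).le (ha k))]
  have hsa : Summable a := by
    apply Summable.of_nonneg_of_le ha (fun k => ?_) (hsla2.div_const ((lam 0)^2))
    rw [le_div_iff₀ (by positivity)]
    nlinarith [mul_le_mul_of_nonneg_right (pow_le_pow_left₀ hl0.le (hlge k) 2) (ha k)]
  obtain ⟨k0, hk0⟩ : ∃ k, z0 k ≠ 0 := Function.ne_iff.mp hz0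
  have hak0 : 0 < a k0 := by
    have : 0 < ‖z0 k0‖ := norm_pos_iff.mpr hk0
    positivity
  set S := ∑' k, a k with hS_def
  set N := ∑' k, lam k * a k with hN_def
  have hS : 0 < S := lt_of_lt_of_le hak0 (Summable.le_tsum hsa k0 fun j _ => ha j)
  have hN : 0 < N :=
    lt_of_lt_of_le (mul_pos (hpos k0) hak0)
      (Summable.le_tsum hsla k0 fun j _ => mul_nonneg (hpos j).le (ha j))
  have hμval : μ₀ = N / S := hμ₀
  have hμpos : 0 < μ₀ := hμval ▸ div_pos hN hS
  have hNμ : N = μ₀ * S := by rw [hμval]; field_simp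
  have hr : 0 < r₀ := by
    rw [hr₀]
    have h1 : 0 < 2 * κ₂^2 / κ₁^2 + 1 := by positivity
    positivity
  have hK0 : 0 < K := by rw [hK]; have := abs_nonneg τ; linarith
  set D := 1 + T^2 * K^2 with hD_def
  have hD : 0 < D := by positivity
  -- Markov bound
  set M := ∑' k : {k : ℕ | r₀ < lam k}, a k with hM_def
  have hM0 : 0 ≤ M := tsum_nonneg (fun k => ha k)
  have hMarkov : r₀ * M ≤ N := by
    have h1 : r₀ * M = ∑' k : {k : ℕ | r₀ < lam k}, r₀ * a (k : ℕ) := (tsum_mul_left).symm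
    have h2 : (∑' k : {k : ℕ | r₀ < lam k}, r₀ * a (k : ℕ))
        ≤ ∑' k : {k : ℕ | r₀ < lam k}, lam (k : ℕ) * a (k : ℕ) := by
      refine Summable.tsum_le_tsum (fun k => ?_) ((hsa.mul_left r₀).subtype _) (hsla.subtype _)
      exact mul_le_mul_of_nonneg_right (le_of_lt k.2) (ha k.1)
    have h3 : (∑' k : {k : ℕ | r₀ < lam k}, lam (k : ℕ) * a (k : ℕ)) ≤ N := by
      rw [hN_def, ← tsum_univ (fun k => lam k * a k)]
      exact tsum_mono_set' (fun k => mul_nonneg (hpos k).le (ha k)) hsla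
        (Set.subset_univ _)
    linarith
  -- summability of the weighted sequence
  have hgub : ∀ s : ℝ, ‖g s‖ ≤ κ₂ * T := fun s => by
    refine (hg s).2.trans ?_
    rw [div_le_iff₀ (by positivity)]
    nlinarith [mul_nonneg (mul_nonneg hκ₂.le hT.le) (mul_nonneg (sq_nonneg T) (sq_nonneg s))]
  have hwa : Summable (fun k => ‖g (τ - lam k)‖^2 * a k) := by
    apply Summable.of_nonneg_of_le (fun k => mul_nonneg (sq_nonneg _) (ha k))
      (fun k => ?_) (hsa.mul_left ((κ₂ * T)^2))
    exact mul_le_mul_of_nonneg_right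
      (pow_le_pow_left₀ (norm_nonneg _) (hgub _) 2) (ha k)
  -- set inclusions
  have hTsub : {k : ℕ | K < |τ - lam k|} ⊆ {k : ℕ | r₀ < lam k} := by
    intro k hk
    simp only [Set.mem_setOf_eq] at hk ⊢
    rcases lt_abs.mp hk with h | h
    · have := hpos k
      have := le_abs_self τ
      linarith [hK ▸ h]
    · have := neg_abs_le τ
      rw [hK] at h
      linarith
  have hLsub : {k : ℕ | lam k ≤ r₀} ⊆ {k : ℕ | |τ - lam k| ≤ K} := by
    intro k hk
    simp only [Set.mem_setOf_eq] at hk ⊢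
    have h1 : |τ - lam k| ≤ |τ| + |lam k| := abs_sub τ (lam k)
    rw [abs_of_pos (hpos k)] at h1
    rw [hK]; linarith
  -- weight bounds
  have hhead : ∀ k : ℕ, |τ - lam k| ≤ K →
      (κ₁ * T / D)^2 * a k ≤ ‖g (τ - lam k)‖^2 * a k := by
    intro k hk
    apply mul_le_mul_of_nonneg_right _ (ha k)
    apply pow_le_pow_left₀ (by positivity)
    refine le_trans ?_ (hg (τ - lam k)).1
    have hsq : (τ - lam k)^2 ≤ K^2 := by
      rw [← sq_abs (τ - lam k)]; exact pow_le_pow_left₀ (abs_nonneg _) hk 2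
    have hden : 1 + T^2 * (τ - lam k)^2 ≤ D := by
      rw [hD_def]; nlinarith [sq_nonneg T]
    exact div_le_div_of_nonneg_left (by positivity) (by positivity) hden
  have htail : ∀ k : ℕ, K < |τ - lam k| →
      ‖g (τ - lam k)‖^2 * a k ≤ (κ₂ * T / D)^2 * a k := by
    intro k hk
    apply mul_le_mul_of_nonneg_right _ (ha k)
    apply pow_le_pow_left₀ (norm_nonneg _)
    refine (hg (τ - lam k)).2.trans ?_
    have hsq : K^2 ≤ (τ - lam k)^2 := by
      rw [← sq_abs (τ - lam k)]; exact pow_le_pow_left₀ hK0.le hk.le 2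
    have hden : D ≤ 1 + T^2 * (τ - lam k)^2 := by
      rw [hD_def]; nlinarith [sq_nonneg T]
    exact div_le_div_of_nonneg_left (by positivity) hD hden
  -- tail sum bound
  have hTailsum : (∑' k : {k : ℕ // K < |τ - lam k|}, ‖g (τ - lam (k : ℕ))‖^2 * a (k : ℕ))
      ≤ (κ₂ * T / D)^2 * M := by
    have h1 : (∑' k : {k : ℕ // K < |τ - lam k|}, ‖g (τ - lam (k : ℕ))‖^2 * a (k : ℕ))
        ≤ ∑' k : {k : ℕ // K < |τ - lam k|}, (κ₂ * T / D)^2 * a (k : ℕ) :=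
      Summable.tsum_le_tsum (fun k => htail k k.2) (hwa.subtype _)
        ((hsa.mul_left ((κ₂ * T / D)^2)).subtype _)
    have h2 : (∑' k : {k : ℕ // K < |τ - lam k|}, (κ₂ * T / D)^2 * a (k : ℕ))
        = (κ₂ * T / D)^2 * ∑' k : {k : ℕ // K < |τ - lam k|}, a (k : ℕ) := tsum_mul_left
    have h3 : (∑' k : {k : ℕ // K < |τ - lam k|}, a (k : ℕ)) ≤ M :=
      tsum_mono_set' ha hsa hTsub
    calc (∑' k : {k : ℕ // K < |τ - lam k|}, ‖g (τ - lam (k : ℕ))‖^2 * a (k : ℕ))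
        ≤ (κ₂ * T / D)^2 * ∑' k : {k : ℕ // K < |τ - lam k|}, a (k : ℕ) := h2 ▸ h1
      _ ≤ (κ₂ * T / D)^2 * M := by
          apply mul_le_mul_of_nonneg_left h3 (by positivity)
  -- head sum bound
  have hcompl : {k : ℕ | lam k ≤ r₀}ᶜ = {k : ℕ | r₀ < lam k} := by
    ext k; simp [not_le]
  have hsplit : (∑' k : {k : ℕ | lam k ≤ r₀}, a (k : ℕ)) = S - M := by
    have := Summable.tsum_add_tsum_compl (f := a) (s := {k : ℕ | lam k ≤ r₀})
      (hsa.subtype _) (hsa.subtype _)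
    rw [hcompl] at this
    rw [← hM_def, ← hS_def] at this
    linarith
  have hHeadsum : (κ₁ * T / D)^2 * (S - M)
      ≤ ∑' k : {k : ℕ // |τ - lam k| ≤ K}, ‖g (τ - lam (k : ℕ))‖^2 * a (k : ℕ) := by
    have h3 : (∑' k : {k : ℕ | lam k ≤ r₀}, a (k : ℕ))
        ≤ ∑' k : {k : ℕ // |τ - lam k| ≤ K}, a (k : ℕ) :=
      tsum_mono_set' ha hsa hLsub
    have h2 : (κ₁ * T / D)^2 * (∑' k : {k : ℕ // |τ - lam k| ≤ K}, a (k : ℕ))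
        = ∑' k : {k : ℕ // |τ - lam k| ≤ K}, (κ₁ * T / D)^2 * a (k : ℕ) := tsum_mul_left.symm
    have h1 : (∑' k : {k : ℕ // |τ - lam k| ≤ K}, (κ₁ * T / D)^2 * a (k : ℕ))
        ≤ ∑' k : {k : ℕ // |τ - lam k| ≤ K}, ‖g (τ - lam (k : ℕ))‖^2 * a (k : ℕ) :=
      Summable.tsum_le_tsum (fun k => hhead k k.2)
        ((hsa.mul_left ((κ₁ * T / D)^2)).subtype _) (hwa.subtype _)
    calc (κ₁ * T / D)^2 * (S - M)
        ≤ (κ₁ * T / D)^2 * (∑' k : {k : ℕ // |τ - lam k| ≤ K}, a (k : ℕ)) := by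
          rw [← hsplit]
          exact mul_le_mul_of_nonneg_left h3 (by positivity)
      _ ≤ _ := h2 ▸ h1
  -- final algebra
  have hkey : 2 * ((κ₂ * T / D)^2 * M) ≤ (κ₁ * T / D)^2 * (S - M) :=
    key_alg κ₁ κ₂ μ₀ r₀ M S T D hκ₁ hμpos hM0 hT hD hr₀ (hNμ ▸ hMarkov)
  calc 2 * (∑' k : {k : ℕ // K < |τ - lam k|}, ‖g (τ - lam (k : ℕ))‖^2 * ‖z0 (k : ℕ)‖^2)
      ≤ 2 * ((κ₂ * T / D)^2 * M) := by linarith [hTailsum]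
    _ ≤ (κ₁ * T / D)^2 * (S - M) := hkey
    _ ≤ _ := hHeadsum
end

section
/- Reduction of weak spectral coercivity to eigenvalues (Lemma 4.2): The following are equivalent. (i) There exist ε > 0 and a continuous nonincreasing function ψ : ℝ → (0,∞) such that for every μ ∈ ℝ and every sequence z supported in {k : |μ − λ k| < ε}, ‖C z‖² ≥ ψ(μ) · Σ_k |z k|². (ii) There exist ε > 0 and a continuous nonincreasing function ψ : ℝ → (0,∞) such that for every n ∈ ℕ and every sequence z supported in {k : |λ n − λ k| < ε}, ‖C z‖² ≥ ψ(λ n) · Σ_k |z k|². Moreover, if (ii) holds with parameters ε, ψ, then (i) holds with parameters ε/2 and s ↦ ψ(s + ε/2). -/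
open scoped BigOperators

/-- Reduction of weak spectral coercivity to eigenvalues (Lemma 4.2). -/
theorem stmt8 (lam : ℕ → ℝ) (hmono : StrictMono lam) (hpos : ∀ k, 0 < lam k)
    (hlim : Filter.Tendsto lam Filter.atTop Filter.atTop)
    (Y : Type) [NormedAddCommGroup Y] [InnerProductSpace ℂ Y] [CompleteSpace Y]
    (C : (ℕ →₀ ℂ) →ₗ[ℂ] Y) :
    ((∃ ε : ℝ, 0 < ε ∧ ∃ ψ : ℝ → ℝ, Continuous ψ ∧ Antitone ψ ∧ (∀ s, 0 < ψ s) ∧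
        ∀ (μ : ℝ) (z : ℕ →₀ ℂ), (∀ k, z k ≠ 0 → |μ - lam k| < ε) →
          ψ μ * (∑' k, ‖z k‖^2) ≤ ‖C z‖^2) ↔
      (∃ ε : ℝ, 0 < ε ∧ ∃ ψ : ℝ → ℝ, Continuous ψ ∧ Antitone ψ ∧ (∀ s, 0 < ψ s) ∧
        ∀ (n : ℕ) (z : ℕ →₀ ℂ), (∀ k, z k ≠ 0 → |lam n - lam k| < ε) →
          ψ (lam n) * (∑' k, ‖z k‖^2) ≤ ‖C z‖^2)) ∧
    (∀ ε : ℝ, 0 < ε → ∀ ψ : ℝ → ℝ, Continuous ψ → Antitone ψ → (∀ s, 0 < ψ s) →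
      (∀ (n : ℕ) (z : ℕ →₀ ℂ), (∀ k, z k ≠ 0 → |lam n - lam k| < ε) →
          ψ (lam n) * (∑' k, ‖z k‖^2) ≤ ‖C z‖^2) →
      ∀ (μ : ℝ) (z : ℕ →₀ ℂ), (∀ k, z k ≠ 0 → |μ - lam k| < ε / 2) →
          ψ (μ + ε / 2) * (∑' k, ‖z k‖^2) ≤ ‖C z‖^2) := by
  have main : ∀ ε : ℝ, 0 < ε → ∀ ψ : ℝ → ℝ, Continuous ψ → Antitone ψ → (∀ s, 0 < ψ s) →
      (∀ (n : ℕ) (z : ℕ →₀ ℂ), (∀ k, z k ≠ 0 → |lam n - lam k| < ε) →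
          ψ (lam n) * (∑' k, ‖z k‖^2) ≤ ‖C z‖^2) →
      ∀ (μ : ℝ) (z : ℕ →₀ ℂ), (∀ k, z k ≠ 0 → |μ - lam k| < ε / 2) →
          ψ (μ + ε / 2) * (∑' k, ‖z k‖^2) ≤ ‖C z‖^2 := by
    intro ε hε ψ hcont hanti hψpos hspec μ z hz
    by_cases h0 : z = 0
    · subst h0
      simp
    · have hne : z.support.Nonempty := Finsupp.support_nonempty_iff.mpr h0
      set n := z.support.max' hne with hn
      have hnmem : n ∈ z.support := z.support.max'_mem hne
      have hnz : z n ≠ 0 := Finsupp.mem_support_iff.mp hnmem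
      have hμn : |μ - lam n| < ε / 2 := hz n hnz
      have key := hspec n z (fun k hk => by
        have h1 : |lam n - lam k| ≤ |lam n - μ| + |μ - lam k| := abs_sub_le _ _ _
        have h2 : |lam n - μ| = |μ - lam n| := abs_sub_comm _ _
        have h3 := hz k hk
        linarith)
      have hS : 0 ≤ ∑' k, ‖z k‖^2 := tsum_nonneg fun k => by positivity
      have hle : lam n ≤ μ + ε / 2 := by
        have := abs_lt.mp hμn
        linarith [this.1, this.2]
      calc ψ (μ + ε / 2) * (∑' k, ‖z k‖^2)
          ≤ ψ (lam n) * (∑' k, ‖z k‖^2) :=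
            mul_le_mul_of_nonneg_right (hanti hle) hS
        _ ≤ ‖C z‖^2 := key
  refine ⟨⟨fun ⟨ε, hε, ψ, h1, h2, h3, h4⟩ => ⟨ε, hε, ψ, h1, h2, h3, fun n z hz => h4 (lam n) z hz⟩,
    fun ⟨ε, hε, ψ, h1, h2, h3, h4⟩ =>
      ⟨ε / 2, by linarith, fun s => ψ (s + ε / 2),
        h1.comp (continuous_id.add continuous_const),
        fun s t hst => h2 (by linarith), fun s => h3 _,
        fun μ z hz => main ε hε ψ h1 h2 h3 h4 μ z hz⟩⟩, main⟩
end

section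
/- Spectral coercivity implies weak spectral coercivity (Theorem 4.3, first implication): Let ε₀ > 0 be a constant and ψ ∈ 𝔠. Assume that for every nonzero z ∈ X₂ with Σ_k (λ k − μ(z))² |z k|² < ε₀ · Σ_k |z k|² one has ‖C z‖² ≥ ψ(μ(z)) · Σ_k |z k|². Then for every β > 0 with 2 β² < ε₀, every μ ∈ ℝ, and every nonzero z ∈ X₂ supported in {k : |μ − λ k| < β}, one has ‖C z‖² ≥ ψ(μ + β) · Σ_k |z k|². -/
open scoped BigOperators

/-- Spectral coercivity implies weak spectral coercivity (Theorem 4.3, first implication). -/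
theorem stmt9 (lam : ℕ → ℝ) (hmono : StrictMono lam) (hpos : ∀ k, 0 < lam k)
    (Y : Type) [NormedAddCommGroup Y] [InnerProductSpace ℂ Y] [CompleteSpace Y]
    (C : (ℕ → ℂ) →ₗ[ℂ] Y)
    (ε₀ : ℝ) (hε₀ : 0 < ε₀)
    (ψ : ℝ → ℝ) (hψc : ContinuousOn ψ (Set.Ici 0)) (hψm : AntitoneOn ψ (Set.Ici 0))
    (hψp : ∀ s, 0 ≤ s → 0 < ψ s)
    (hcoer : ∀ z : ℕ → ℂ, z ≠ 0 → MemX2 lam z →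
      (∑' k, (lam k - freq lam z)^2 * ‖z k‖^2) < ε₀ * ∑' k, ‖z k‖^2 →
      ψ (freq lam z) * (∑' k, ‖z k‖^2) ≤ ‖C z‖^2) :
    ∀ β : ℝ, 0 < β → 2 * β^2 < ε₀ → ∀ μ : ℝ, ∀ z : ℕ → ℂ, z ≠ 0 → MemX2 lam z →
      (∀ k, z k ≠ 0 → |μ - lam k| < β) →
      ψ (μ + β) * (∑' k, ‖z k‖^2) ≤ ‖C z‖^2 := by
  intro β hβ hβε μ z hz hX2 hsupp
  have hwnn : ∀ k, (0:ℝ) ≤ ‖z k‖^2 := fun k => sq_nonneg _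
  have hl0 : ∀ k, lam 0 ≤ lam k := fun k => hmono.monotone (Nat.zero_le k)
  have hX2' : Summable fun k => (lam k)^2 * ‖z k‖^2 := hX2
  -- summability of ‖z‖²
  have hsumw : Summable fun k => ‖z k‖^2 := by
    apply Summable.of_nonneg_of_le hwnn (fun k => ?_) (hX2'.mul_left ((lam 0)^2)⁻¹)
    have h1 : (lam 0)^2 * ‖z k‖^2 ≤ (lam k)^2 * ‖z k‖^2 := by
      apply mul_le_mul_of_nonneg_right _ (hwnn k)
      nlinarith [hl0 k, hpos 0, hpos k]
    calc ‖z k‖^2 = ((lam 0)^2)⁻¹ * ((lam 0)^2 * ‖z k‖^2) := by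
          rw [← mul_assoc, inv_mul_cancel₀ (pow_ne_zero 2 (hpos 0).ne'), one_mul]
      _ ≤ ((lam 0)^2)⁻¹ * ((lam k)^2 * ‖z k‖^2) := by
          apply mul_le_mul_of_nonneg_left h1 (by positivity)
  -- summability of λ‖z‖²
  have hsumL1 : Summable fun k => lam k * ‖z k‖^2 := by
    apply Summable.of_nonneg_of_le (fun k => mul_nonneg (hpos k).le (hwnn k))
      (fun k => ?_) (hsumw.add hX2')
    have : lam k ≤ 1 + (lam k)^2 := by nlinarith [sq_nonneg (lam k - 1)]
    nlinarith [hwnn k, this]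
  set W : ℝ := ∑' k, ‖z k‖^2 with hWdef
  set L1 : ℝ := ∑' k, lam k * ‖z k‖^2 with hL1def
  set L2 : ℝ := ∑' k, (lam k)^2 * ‖z k‖^2 with hL2def
  have hW : 0 < W := by
    obtain ⟨k, hk⟩ := Function.ne_iff.mp hz
    exact Summable.tsum_pos hsumw hwnn k (pow_pos (norm_pos_iff.mpr hk) 2)
  have hfreq : freq lam z = L1 / W := rfl
  -- expansion lemma
  have key : ∀ c : ℝ, (Summable fun k => (lam k - c)^2 * ‖z k‖^2) ∧
      ∑' k, (lam k - c)^2 * ‖z k‖^2 = L2 - 2*c*L1 + c^2*W := by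
    intro c
    have heq : ∀ k, (lam k - c)^2 * ‖z k‖^2
        = ((lam k)^2 * ‖z k‖^2 - 2*c*(lam k * ‖z k‖^2)) + c^2 * ‖z k‖^2 := by
      intro k; ring
    have hs : Summable fun k => ((lam k)^2 * ‖z k‖^2 - 2*c*(lam k * ‖z k‖^2)) + c^2 * ‖z k‖^2 :=
      ((hX2'.sub (hsumL1.mul_left (2*c))).add (hsumw.mul_left (c^2)))
    constructor
    · exact hs.congr (fun k => (heq k).symm)
    · calc ∑' k, (lam k - c)^2 * ‖z k‖^2
          = ∑' k, (((lam k)^2 * ‖z k‖^2 - 2*c*(lam k * ‖z k‖^2)) + c^2 * ‖z k‖^2) :=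
            tsum_congr heq
        _ = (∑' k, ((lam k)^2 * ‖z k‖^2 - 2*c*(lam k * ‖z k‖^2))) + ∑' k, c^2 * ‖z k‖^2 :=
            Summable.tsum_add (hX2'.sub (hsumL1.mul_left (2*c))) (hsumw.mul_left (c^2))
        _ = ((∑' k, (lam k)^2 * ‖z k‖^2) - ∑' k, 2*c*(lam k * ‖z k‖^2)) + ∑' k, c^2 * ‖z k‖^2 := by
            rw [Summable.tsum_sub hX2' (hsumL1.mul_left (2*c))]
        _ = L2 - 2*c*L1 + c^2*W := by rw [tsum_mul_left, tsum_mul_left]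
  -- L1 ≤ (μ+β) W
  have hL1le : L1 ≤ (μ + β) * W := by
    have := Summable.tsum_le_tsum (f := fun k => lam k * ‖z k‖^2)
      (g := fun k => (μ + β) * ‖z k‖^2) (fun k => ?_) hsumL1 (hsumw.mul_left (μ+β))
    · rwa [tsum_mul_left] at this
    · by_cases hzk : z k = 0
      · simp [hzk]
      · have h := hsupp k hzk
        have : lam k ≤ μ + β := by
          have := abs_lt.mp h; linarith [this.1]
        exact mul_le_mul_of_nonneg_right this (hwnn k)
  set ν : ℝ := L1 / W with hνdef
  have hν0 : 0 ≤ ν := div_nonneg (tsum_nonneg (fun k => mul_nonneg (hpos k).le (hwnn k))) hW.le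
  have hνle : ν ≤ μ + β := (div_le_iff₀ hW).mpr hL1le
  have hμβ0 : 0 ≤ μ + β := hν0.trans hνle
  -- variance bound at μ
  have hvarμ : ∑' k, (lam k - μ)^2 * ‖z k‖^2 ≤ β^2 * W := by
    have := Summable.tsum_le_tsum (f := fun k => (lam k - μ)^2 * ‖z k‖^2)
      (g := fun k => β^2 * ‖z k‖^2) (fun k => ?_) (key μ).1 (hsumw.mul_left (β^2))
    · rwa [tsum_mul_left] at this
    · by_cases hzk : z k = 0
      · simp [hzk]
      · have h := abs_lt.mp (hsupp k hzk)
        apply mul_le_mul_of_nonneg_right _ (hwnn k)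
        nlinarith [h.1, h.2]
  -- variance at ν ≤ variance at μ
  have hνW : ν * W = L1 := div_mul_cancel₀ _ hW.ne'
  have hvar : ∑' k, (lam k - ν)^2 * ‖z k‖^2 < ε₀ * W := by
    have hvν := (key ν).2
    have hvμ := (key μ).2
    have h1 : L2 - 2*ν*L1 + ν^2*W ≤ L2 - 2*μ*L1 + μ^2*W := by
      nlinarith [sq_nonneg (μ*W - L1), hW, hνW, mul_pos hW hW]
    have h2 : β^2 < ε₀ := by nlinarith
    calc ∑' k, (lam k - ν)^2 * ‖z k‖^2 = L2 - 2*ν*L1 + ν^2*W := hvν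
      _ ≤ L2 - 2*μ*L1 + μ^2*W := h1
      _ = ∑' k, (lam k - μ)^2 * ‖z k‖^2 := hvμ.symm
      _ ≤ β^2 * W := hvarμ
      _ < ε₀ * W := by nlinarith
  have hmain := hcoer z hz hX2 (by rw [hfreq]; exact hvar)
  have hψle : ψ (μ + β) ≤ ψ ν := hψm hν0 hμβ0 hνle
  calc ψ (μ + β) * W ≤ ψ ν * W := mul_le_mul_of_nonneg_right hψle hW.le
    _ = ψ (freq lam z) * W := by rw [hfreq]
    _ ≤ ‖C z‖^2 := hmain
end

section
/- Weak spectral coercivity plus a uniform off-cluster bound implies spectral coercivity (Theorem 4.3, converse implication): Let ε > 0, M > 0 and let ψ : ℝ → (0,∞) be continuous and nonincreasing. Assume: (a) for every μ ∈ ℝ and every z ∈ X₂ supported in {k : |μ − λ k| < ε}, ‖C z‖² ≥ ψ(μ) · Σ_k |z k|²; and (b) for every μ ≥ 0 and every z ∈ X₂ supported in {k : |μ − λ k| ≥ ε}, ‖C z‖² ≤ M · Σ_k (λ k − μ)² |z k|². Define β(s) = (1/2) · (2M/ψ(s) + 1/ε²)⁻¹. Then for every nonzero z ∈ X₂ with Σ_k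 (λ k − μ(z))² |z k|² < β(μ(z)) · Σ_k |z k|², one has ‖C z‖² ≥ (1/4) · ψ(μ(z)) · Σ_k |z k|². -/
open scoped BigOperators

/-!
Split `z` into its part `z₁` on the spectral cluster `{k : |μ - λ k| < ε}` around its frequency `μ`
and the remainder `z₂`, and write `N = ‖z‖²`, `D = Σ (λ k - μ)² |z k|²`. Hypothesis (a) gives
`ψ(μ) ‖z₁‖² ≤ ‖C z₁‖² ≤ 2 ‖C z‖² + 2 ‖C z₂‖²`, hypothesis (b) gives `‖C z₂‖² ≤ M D`, and on the
remainder `(λ k - μ)² ≥ ε²`, so `ε² ‖z₂‖² ≤ D`. Adding up,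
`ψ(μ) N ≤ 2 ‖C z‖² + ψ(μ) (2M/ψ(μ) + 1/ε²) D < 2 ‖C z‖² + ψ(μ) N / 2`.
-/

lemma norm_sq_le_two_mul_norm_add_sq_add {E : Type*} [SeminormedAddCommGroup E] (a b : E) :
    ‖a‖ ^ 2 ≤ 2 * (‖a + b‖ ^ 2 + ‖b‖ ^ 2) :=
  calc ‖a‖ ^ 2 ≤ (‖a + b‖ + ‖b‖) ^ 2 := by
        gcongr
        simpa using norm_sub_le (a + b) b
    _ ≤ 2 * (‖a + b‖ ^ 2 + ‖b‖ ^ 2) := add_sq_le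

lemma mul_norm_indicator_sq (g : ℕ → ℝ) (s : Set ℕ) (z : ℕ → ℂ) (k : ℕ) :
    g k * ‖s.indicator z k‖ ^ 2 = s.indicator (fun k => g k * ‖z k‖ ^ 2) k := by
  by_cases hk : k ∈ s <;> simp [hk]

lemma summable_mul_norm_indicator_sq {g : ℕ → ℝ} {z : ℕ → ℂ}
    (hz : Summable fun k => g k * ‖z k‖ ^ 2) (s : Set ℕ) :
    Summable fun k => g k * ‖s.indicator z k‖ ^ 2 := by
  simpa only [mul_norm_indicator_sq] using hz.indicator s

lemma tsum_norm_sq_eq_indicator_add_compl {z : ℕ → ℂ} (hz : Summable fun k => ‖z k‖ ^ 2)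
    (s : Set ℕ) :
    ∑' k, ‖z k‖ ^ 2 = ∑' k, ‖s.indicator z k‖ ^ 2 + ∑' k, ‖sᶜ.indicator z k‖ ^ 2 := by
  have hs (t : Set ℕ) : Summable fun k => ‖t.indicator z k‖ ^ 2 := by
    simpa using summable_mul_norm_indicator_sq (g := 1) (by simpa using hz) t
  rw [← (hs _).tsum_add (hs _)]
  refine tsum_congr fun k => ?_
  by_cases hk : k ∈ s <;> simp [hk]

section MemX2

variable {lam : ℕ → ℝ} {z : ℕ → ℂ}

lemma MemX2.indicator (hz : MemX2 lam z) (s : Set ℕ) : MemX2 lam (s.indicator z) :=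
  summable_mul_norm_indicator_sq hz s

lemma MemX2.summable_norm_sq {c : ℝ} (hc : 0 < c) (hlam : ∀ k, c ≤ lam k) (hz : MemX2 lam z) :
    Summable fun k => ‖z k‖ ^ 2 := by
  refine (hz.mul_left (c ^ 2)⁻¹).of_nonneg_of_le (fun k => by positivity) fun k => ?_
  rw [le_inv_mul_iff₀ (by positivity)]
  gcongr
  exact hlam k

lemma MemX2.summable_sub_sq_mul_norm_sq (hz : MemX2 lam z)
    (hz' : Summable fun k => ‖z k‖ ^ 2) (μ : ℝ) :
    Summable fun k => (lam k - μ) ^ 2 * ‖z k‖ ^ 2 := by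
  refine ((hz.add (hz'.mul_left (μ ^ 2))).mul_left 2).of_nonneg_of_le
    (fun k => by positivity) fun k => ?_
  rw [← add_mul, ← mul_assoc]
  gcongr
  simpa [← sub_eq_add_neg] using add_sq_le (a := lam k) (b := -μ)

lemma freq_nonneg_s10 (hlam : ∀ k, 0 ≤ lam k) : 0 ≤ freq lam z :=
  div_nonneg (tsum_nonneg fun k => mul_nonneg (hlam k) (by positivity))
    (tsum_nonneg fun k => by positivity)

def cluster (lam : ℕ → ℝ) (μ ε : ℝ) : Set ℕ := {k | |μ - lam k| < ε}

lemma tsum_sub_sq_mul_norm_indicator_le {μ : ℝ}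
    (hD : Summable fun k => (lam k - μ) ^ 2 * ‖z k‖ ^ 2) (s : Set ℕ) :
    ∑' k, (lam k - μ) ^ 2 * ‖s.indicator z k‖ ^ 2 ≤ ∑' k, (lam k - μ) ^ 2 * ‖z k‖ ^ 2 := by
  have hle (k : ℕ) : (lam k - μ) ^ 2 * ‖s.indicator z k‖ ^ 2 ≤ (lam k - μ) ^ 2 * ‖z k‖ ^ 2 := by
    gcongr
    exact norm_indicator_le_norm_self z k
  exact (hD.of_nonneg_of_le (fun k => by positivity) hle).tsum_le_tsum hle hD

lemma sq_mul_tsum_norm_indicator_compl_cluster_le {μ ε : ℝ}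
    (hD : Summable fun k => (lam k - μ) ^ 2 * ‖z k‖ ^ 2) (hε : 0 ≤ ε) :
    ε ^ 2 * ∑' k, ‖(cluster lam μ ε)ᶜ.indicator z k‖ ^ 2
      ≤ ∑' k, (lam k - μ) ^ 2 * ‖z k‖ ^ 2 := by
  have hle (k : ℕ) :
      ε ^ 2 * ‖(cluster lam μ ε)ᶜ.indicator z k‖ ^ 2 ≤ (lam k - μ) ^ 2 * ‖z k‖ ^ 2 := by
    by_cases hk : k ∈ cluster lam μ ε
    · rw [Set.indicator_of_notMem (Set.notMem_compl_iff.mpr hk), norm_zero,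
        zero_pow two_ne_zero, mul_zero]
      positivity
    · have hfar : ε ^ 2 ≤ (lam k - μ) ^ 2 := by
        rw [← sq_abs (lam k - μ), abs_sub_comm]
        exact pow_le_pow_left₀ hε (not_lt.mp hk) 2
      rw [Set.indicator_of_mem (Set.mem_compl hk)]
      gcongr
  rw [← tsum_mul_left]
  exact (hD.of_nonneg_of_le (fun k => by positivity) hle).tsum_le_tsum hle hD

end MemX2

/-- Here `a`, `b`, `x` stand for `‖C z₁‖²`, `‖C z₂‖²`, `‖C z‖²`. -/
lemma quarter_mul_le_of_split {ψ M ε N₁ N₂ D a b x : ℝ} (hψ : 0 < ψ) (hM : 0 < M) (hε : 0 < ε)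
    (hnear : ψ * N₁ ≤ a) (hab : a ≤ 2 * (x + b)) (hfar : b ≤ M * D) (hN₂ : ε ^ 2 * N₂ ≤ D)
    (hD : D < 1 / 2 * (2 * M / ψ + 1 / ε ^ 2)⁻¹ * (N₁ + N₂)) :
    1 / 4 * ψ * (N₁ + N₂) ≤ x := by
  set c := 2 * M / ψ + 1 / ε ^ 2
  have hc : 0 < c := by positivity
  have hDc : D * c < (N₁ + N₂) / 2 := by
    calc D * c < 1 / 2 * c⁻¹ * (N₁ + N₂) * c := by gcongr
      _ = (N₁ + N₂) / 2 := by field_simp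
  have hψN₂ : ψ * N₂ ≤ ψ * D / ε ^ 2 := by
    rw [le_div_iff₀ (by positivity)]
    nlinarith
  have hψDc : ψ * D * c = 2 * M * D + ψ * D / ε ^ 2 := by
    simp only [c]
    field_simp
  nlinarith

theorem stmt10_general (lam : ℕ → ℝ) (hmono : StrictMono lam) (hpos : ∀ k, 0 < lam k)
    (Y : Type) [NormedAddCommGroup Y] [InnerProductSpace ℂ Y]
    (C : (ℕ → ℂ) →ₗ[ℂ] Y)
    (ε M : ℝ) (hε : 0 < ε) (hM : 0 < M)
    (ψ : ℝ → ℝ) (hψp : ∀ s, 0 < ψ s)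
    (ha : ∀ μ : ℝ, ∀ z : ℕ → ℂ, MemX2 lam z → (∀ k, z k ≠ 0 → |μ - lam k| < ε) →
      ψ μ * (∑' k, ‖z k‖^2) ≤ ‖C z‖^2)
    (hb : ∀ μ : ℝ, 0 ≤ μ → ∀ z : ℕ → ℂ, MemX2 lam z → (∀ k, z k ≠ 0 → ε ≤ |μ - lam k|) →
      ‖C z‖^2 ≤ M * ∑' k, (lam k - μ)^2 * ‖z k‖^2) :
    ∀ z : ℕ → ℂ, z ≠ 0 → MemX2 lam z →
      (∑' k, (lam k - freq lam z)^2 * ‖z k‖^2)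
        < (1/2) * (2 * M / ψ (freq lam z) + 1 / ε^2)⁻¹ * (∑' k, ‖z k‖^2) →
      (1/4) * ψ (freq lam z) * (∑' k, ‖z k‖^2) ≤ ‖C z‖^2 := by
  intro z _ hz hsmall
  set μ := freq lam z
  set s := cluster lam μ ε
  have hN := hz.summable_norm_sq (hpos 0) fun k => hmono.monotone (Nat.zero_le k)
  have hD := hz.summable_sub_sq_mul_norm_sq hN μ
  have hnear := ha μ (s.indicator z) (hz.indicator s) fun k hk =>
    (Set.mem_of_indicator_ne_zero hk : k ∈ s)
  have hfar := hb μ (freq_nonneg_s10 fun k => (hpos k).le) (sᶜ.indicator z) (hz.indicator sᶜ)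
    fun k hk => not_lt.mp (Set.mem_of_indicator_ne_zero hk : k ∈ sᶜ)
  have hCz : C z = C (s.indicator z) + C (sᶜ.indicator z) := by
    rw [← map_add, Set.indicator_self_add_compl]
  have hsplit := tsum_norm_sq_eq_indicator_add_compl hN s
  rw [hsplit] at hsmall
  rw [hsplit, hCz]
  exact quarter_mul_le_of_split (hψp μ) hM hε hnear (norm_sq_le_two_mul_norm_add_sq_add _ _)
    (hfar.trans (mul_le_mul_of_nonneg_left (tsum_sub_sq_mul_norm_indicator_le hD _) hM.le))
    (sq_mul_tsum_norm_indicator_compl_cluster_le hD hε.le) hsmall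

/-- Weak spectral coercivity plus a uniform off-cluster bound implies spectral coercivity
(Theorem 4.3, converse implication). -/
theorem stmt10 (lam : ℕ → ℝ) (hmono : StrictMono lam) (hpos : ∀ k, 0 < lam k)
    (hlim : Filter.Tendsto lam Filter.atTop Filter.atTop)
    (Y : Type) [NormedAddCommGroup Y] [InnerProductSpace ℂ Y] [CompleteSpace Y]
    (C : (ℕ → ℂ) →ₗ[ℂ] Y)
    (ε M : ℝ) (hε : 0 < ε) (hM : 0 < M)
    (ψ : ℝ → ℝ) (hψc : Continuous ψ) (hψm : Antitone ψ) (hψp : ∀ s, 0 < ψ s)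
    (ha : ∀ μ : ℝ, ∀ z : ℕ → ℂ, MemX2 lam z → (∀ k, z k ≠ 0 → |μ - lam k| < ε) →
      ψ μ * (∑' k, ‖z k‖^2) ≤ ‖C z‖^2)
    (hb : ∀ μ : ℝ, 0 ≤ μ → ∀ z : ℕ → ℂ, MemX2 lam z → (∀ k, z k ≠ 0 → ε ≤ |μ - lam k|) →
      ‖C z‖^2 ≤ M * ∑' k, (lam k - μ)^2 * ‖z k‖^2) :
    ∀ z : ℕ → ℂ, z ≠ 0 → MemX2 lam z →
      (∑' k, (lam k - freq lam z)^2 * ‖z k‖^2)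
        < (1/2) * (2 * M / ψ (freq lam z) + 1 / ε^2)⁻¹ * (∑' k, ‖z k‖^2) →
      (1/4) * ψ (freq lam z) * (∑' k, ‖z k‖^2) ≤ ‖C z‖^2 :=
  stmt10_general lam hmono hpos Y C ε M hε hM ψ hψp ha hb
end
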